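/- Let n ≥ 3 and let T be an admissible family of ordered pairs on Fin n. Then the family of points of ℝⁿ indexed by the pairs (i,j) ∈ T and given by e_i − e_j is affinely independent; in particular the simplex spanned by {e_i − e_j : (i,j) ∈ T} is non-degenerate. -/

import Mathlib

/-- The half-open arc `[i, j)` in the cyclically ordered set `Fin n`:
the set of `x` such that the clock distance from `i` to `x` is smaller
than the clock distance from `i` to `j`. -/
def arcSet {n : ℕ} (i j : Fin n) : Set (Fin n) :=
  {x | ((x - i : Fin n) : ℕ) < ((j - i : Fin n) : ℕ)}

/-- A finite family of ordered pairs `(i, j)` (thought of as the arcs `[i, j)`)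
is admissible if all pairs have distinct coordinates, any two arcs meeting
in at least one point are nested, and any two disjoint arcs have a union
which is not an arc. -/
def IsAdmissible {n : ℕ} (T : Finset (Fin n × Fin n)) : Prop :=
  (∀ p ∈ T, p.1 ≠ p.2) ∧
  ∀ p ∈ T, ∀ q ∈ T, p ≠ q →
    ((arcSet p.1 p.2 ∩ arcSet q.1 q.2).Nonempty →
        arcSet p.1 p.2 ⊆ arcSet q.1 q.2 ∨ arcSet q.1 q.2 ⊆ arcSet p.1 p.2) ∧
    (arcSet p.1 p.2 ∩ arcSet q.1 q.2 = ∅ → p.2 ≠ q.1 ∧ q.2 ≠ p.1)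

namespace AdmAux

open Fin.NatCast


variable {n : ℕ} [NeZero n]

lemma castSubVal (u v : ℕ) (hu : u < n) (hv : v < n) :
    (((u : Fin n) - (v : Fin n) : Fin n) : ℕ) = if v ≤ u then u - v else n - v + u := by
  have h : (((u : Fin n) - (v : Fin n) : Fin n) : ℕ) = (n - v + u) % n := by
    simp [Fin.sub_def, Fin.val_cast_of_lt hu, Fin.val_cast_of_lt hv]
  rw [h]
  split_ifs with hvu
  · have e : n - v + u = (u - v) + n := by omega
    rw [e, Nat.add_mod_right, Nat.mod_eq_of_lt (by omega)]
  · exact Nat.mod_eq_of_lt (by omega)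

lemma decompose (i x : Fin n) : x = i + ((((x - i : Fin n) : ℕ)) : Fin n) := by
  rw [Fin.cast_val_eq_self, add_comm, sub_add_cancel]

lemma mem_arc_iff {i x : Fin n} {d : ℕ} (hd : d < n) :
    x ∈ arcSet i (i + (d : Fin n)) ↔ ((x - i : Fin n) : ℕ) < d := by
  unfold arcSet
  rw [Set.mem_setOf_eq, add_sub_cancel_left, Fin.val_cast_of_lt hd]

lemma diff_val (i : Fin n) (u v : ℕ) (hu : u < n) (hv : v < n) :
    (((i + (u : Fin n)) - (i + (v : Fin n)) : Fin n) : ℕ)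
      = if v ≤ u then u - v else n - v + u := by
  rw [add_sub_add_left_eq_sub]; exact castSubVal u v hu hv

lemma neg_diff {i : Fin n} {a : ℕ} (ha : a < n) (ha0 : a ≠ 0) :
    ((i - (i + (a : Fin n)) : Fin n) : ℕ) = n - a := by
  have e : (i - (i + (a : Fin n)) : Fin n) = (i + ((0:ℕ) : Fin n)) - (i + (a : Fin n)) := by
    norm_num
  rw [e, diff_val i 0 a (Nat.pos_of_ne_zero (NeZero.ne n)) ha]
  split_ifs with h
  · omega
  · omega

lemma cast_inj {u v : ℕ} (hu : u < n) (hv : v < n) : ((u : Fin n) = (v : Fin n)) ↔ u = v := by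
  constructor
  · intro h
    have := congrArg Fin.val h
    rwa [Fin.val_cast_of_lt hu, Fin.val_cast_of_lt hv] at this
  · intro h; rw [h]

lemma val_ne_zero {A : Fin n} (hA : A ≠ 0) : (A : ℕ) ≠ 0 := by
  intro h
  exact hA (Fin.val_injective (by simp [h]))

lemma dpos {i j : Fin n} (h : i ≠ j) : 0 < ((j - i : Fin n) : ℕ) := by
  refine Nat.pos_of_ne_zero fun h0 => ?_
  have : j - i = 0 := Fin.val_injective (by simp [h0])
  exact h (sub_eq_zero.mp this).symm

lemma sub_one_val (hn2 : 1 < n) {A : Fin n} (hA : A ≠ 0) :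
    ((A - 1 : Fin n) : ℕ) = (A : ℕ) - 1 := by
  have hv := val_ne_zero hA
  have e : (A - 1 : Fin n) = ((A : ℕ) : Fin n) - (((1:ℕ)) : Fin n) := by
    rw [Fin.cast_val_eq_self, Nat.cast_one]
  rw [e, castSubVal (A : ℕ) 1 A.isLt hn2]
  split_ifs with h
  · rfl
  · omega

lemma arc_subset_param {i : Fin n} (hn3 : 3 ≤ n) {a dp dq : ℕ}
    (ha : a < n) (hdp : dp < n) (hdq : dq < n) (hdq0 : 0 < dq)
    (hsub : arcSet (i + (a : Fin n)) (i + (a : Fin n) + (dq : Fin n))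
      ⊆ arcSet i (i + (dp : Fin n))) :
    a + dq ≤ dp := by
  have key : ∀ m : ℕ, m < dq → (a + m) % n < dp := by
    intro m hm
    have hy : (i + (a : Fin n)) + (m : Fin n)
        ∈ arcSet (i + (a : Fin n)) ((i + (a : Fin n)) + (dq : Fin n)) := by
      rw [mem_arc_iff hdq, add_sub_cancel_left, Fin.val_cast_of_lt (lt_trans hm hdq)]
      exact hm
    have h2 := hsub hy
    rw [mem_arc_iff hdp] at h2
    have e : ((i + (a : Fin n) + (m : Fin n) - i : Fin n) : ℕ) = (a + m) % n := by
      rw [add_assoc, ← Nat.cast_add, add_sub_cancel_left, Fin.val_natCast]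
    rwa [e] at h2
  by_contra hlt
  push_neg at hlt
  rcases le_or_gt (a + dq) n with h1 | h2
  · have h0 := key 0 hdq0
    rw [Nat.add_zero, Nat.mod_eq_of_lt ha] at h0
    have hm := key (dp - a) (by omega)
    rw [Nat.mod_eq_of_lt (by omega)] at hm
    omega
  · have hm := key (n - 1 - a) (by omega)
    have e : a + (n - 1 - a) = n - 1 := by omega
    rw [e, Nat.mod_eq_of_lt (by omega)] at hm
    omega


lemma subset_le (hn3 : 3 ≤ n) {ip jp iq jq : Fin n} (hq : iq ≠ jq)
    (hsub : arcSet iq jq ⊆ arcSet ip jp) :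
    ((iq - ip : Fin n) : ℕ) + ((jq - iq : Fin n) : ℕ) ≤ ((jp - ip : Fin n) : ℕ) := by
  have haeq : iq = ip + ((((iq - ip : Fin n) : ℕ)) : Fin n) := decompose ip iq
  have hdeq : jq = iq + ((((jq - iq : Fin n) : ℕ)) : Fin n) := decompose iq jq
  have hpeq : jp = ip + ((((jp - ip : Fin n) : ℕ)) : Fin n) := decompose ip jp
  have e1 : arcSet iq jq
      = arcSet (ip + ((((iq - ip : Fin n) : ℕ)) : Fin n))
          (ip + ((((iq - ip : Fin n) : ℕ)) : Fin n) + ((((jq - iq : Fin n) : ℕ)) : Fin n)) := by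
    rw [← haeq, ← hdeq]
  have e2 : arcSet ip jp = arcSet ip (ip + ((((jp - ip : Fin n) : ℕ)) : Fin n)) := by
    rw [← hpeq]
  rw [e1, e2] at hsub
  exact arc_subset_param hn3 (iq - ip).isLt (jp - ip).isLt (jq - iq).isLt (dpos hq) hsub

lemma jump (hn3 : 3 ≤ n) {i j : Fin n} (hij : i ≠ j) (x : Fin n) :
    ((arcSet i j).indicator (fun _ => (1:ℝ)) x - (arcSet i j).indicator (fun _ => (1:ℝ)) (x - 1))
      = (if x = i then (1:ℝ) else 0) - (if x = j then 1 else 0) := by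
  classical
  rw [Set.indicator_apply, Set.indicator_apply]
  have hd1 : 1 ≤ ((j - i : Fin n) : ℕ) := dpos hij
  have hdn : ((j - i : Fin n) : ℕ) < n := (j - i).isLt
  have hkn : ((x - i : Fin n) : ℕ) < n := (x - i).isLt
  have hj : j = i + ((((j - i : Fin n) : ℕ)) : Fin n) := decompose i j
  have hx : x = i + ((((x - i : Fin n) : ℕ)) : Fin n) := decompose i x
  have hxmem : x ∈ arcSet i j ↔ ((x - i : Fin n) : ℕ) < ((j - i : Fin n) : ℕ) := Iff.rfl
  have hsub1 : ((x - 1 - i : Fin n) : ℕ)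
      = if 1 ≤ ((x - i : Fin n) : ℕ) then ((x - i : Fin n) : ℕ) - 1
        else n - 1 + ((x - i : Fin n) : ℕ) := by
    rw [sub_right_comm]
    have e : (x - i - 1 : Fin n)
        = ((((x - i : Fin n) : ℕ)) : Fin n) - (((1:ℕ)) : Fin n) := by
      rw [Fin.cast_val_eq_self, Nat.cast_one]
    rw [e, castSubVal _ 1 hkn (by omega)]
  have hxm1 : (x - 1) ∈ arcSet i j ↔
      ((if 1 ≤ ((x - i : Fin n) : ℕ) then ((x - i : Fin n) : ℕ) - 1
        else n - 1 + ((x - i : Fin n) : ℕ)) < ((j - i : Fin n) : ℕ)) := by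
    unfold arcSet; rw [Set.mem_setOf_eq, hsub1]
  have hxi : x = i ↔ ((x - i : Fin n) : ℕ) = 0 := by
    rw [← sub_eq_zero]
    constructor
    · intro h; rw [h, Fin.val_zero]
    · intro h; exact Fin.val_injective (by simp [h])
  have hxj : x = j ↔ ((x - i : Fin n) : ℕ) = ((j - i : Fin n) : ℕ) := by
    constructor
    · intro h; rw [h]
    · intro h
      have : (x - i : Fin n) = (j - i : Fin n) := Fin.val_injective h
      exact sub_left_inj.mp this
  simp only [hxmem, hxm1, hxi, hxj]
  split_ifs
  all_goals try norm_num
  all_goals omega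

lemma mem_arc' {n : ℕ} [NeZero n] {i j z : Fin n} :
    z ∈ arcSet i j ↔ ((z - i : Fin n) : ℕ) < ((j - i : Fin n) : ℕ) := Iff.rfl

end AdmAux

open AdmAux Fin.NatCast in
/-- The points `e_i - e_j`, for `(i,j)` ranging over an admissible family of
arcs, are affinely independent. -/
theorem affineIndependent_of_admissible (n : ℕ) (hn : 3 ≤ n)
    (T : Finset (Fin n × Fin n)) (hT : IsAdmissible T) :
    AffineIndependent ℝ (fun p : {p // p ∈ T} =>
      (EuclideanSpace.single p.1.1 (1 : ℝ) - EuclideanSpace.single p.1.2 (1 : ℝ))) := by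
  classical
  haveI : NeZero n := ⟨by omega⟩
  rw [affineIndependent_iff]
  intro s w _ hrel q hq
  by_contra hwq
  -- the support
  set S : Finset {p // p ∈ T} := s.filter fun r => w r ≠ 0 with hS
  have hqS : q ∈ S := Finset.mem_filter.mpr ⟨hq, hwq⟩
  have hine : ∀ r : {p // p ∈ T}, r.1.1 ≠ r.1.2 := fun r => hT.1 r.1 r.2
  have hdpos : ∀ r : {p // p ∈ T}, 0 < ((r.1.2 - r.1.1 : Fin n) : ℕ) :=
    fun r => dpos (hine r)
  have hdlt : ∀ r : {p // p ∈ T}, ((r.1.2 - r.1.1 : Fin n) : ℕ) < n := fun r => Fin.isLt _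
  have hjdec : ∀ r : {p // p ∈ T},
      r.1.2 = r.1.1 + ((((r.1.2 - r.1.1 : Fin n) : ℕ)) : Fin n) := fun r => decompose _ _
  set g : Fin n → ℝ :=
    fun x => ∑ r ∈ s, w r * (arcSet r.1.1 r.1.2).indicator (fun _ => (1:ℝ)) x with hg
  -- evaluation of the linear relation at a coordinate
  have happ : ∀ x : Fin n,
      ∑ r ∈ s, w r * ((if x = r.1.1 then (1:ℝ) else 0) - (if x = r.1.2 then 1 else 0)) = 0 := by
    intro x
    have h1 : ∑ r ∈ s, w r * ((if x = r.1.1 then (1:ℝ) else 0) - (if x = r.1.2 then 1 else 0))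
        = (∑ r ∈ s, w r • (EuclideanSpace.single r.1.1 (1:ℝ)
            - EuclideanSpace.single r.1.2 (1:ℝ))) x := by
      rw [WithLp.ofLp_sum, Finset.sum_apply]
      apply Finset.sum_congr rfl
      intro r _
      simp [EuclideanSpace.single_apply]
    rw [h1, hrel]
    rfl
  -- g has zero jumps
  have hjumps : ∀ x : Fin n, g x - g (x - 1) = 0 := by
    intro x
    have e : g x - g (x - 1)
        = ∑ r ∈ s, w r * ((if x = r.1.1 then (1:ℝ) else 0) - (if x = r.1.2 then 1 else 0)) := by
      rw [hg, ← Finset.sum_sub_distrib]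
      apply Finset.sum_congr rfl
      intro r _
      rw [← mul_sub, jump hn (hine r) x]
    rw [e, happ x]
  have hsucc : ∀ z : Fin n, g (z + 1) = g z := by
    intro z
    have h := hjumps (z + 1)
    rw [add_sub_cancel_right] at h
    linarith
  have hshift : ∀ (m : ℕ) (z : Fin n), g (z + (m : Fin n)) = g z := by
    intro m
    induction m with
    | zero => intro z; norm_num
    | succ m ih =>
        intro z
        have e : ((m + 1 : ℕ) : Fin n) = ((m : ℕ) : Fin n) + 1 := by push_cast; ring
        rw [e, ← add_assoc, hsucc, ih]
  have hconst : ∀ x y : Fin n, g x = g y := by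
    intro x y
    conv_lhs => rw [decompose y x]
    exact hshift _ y
  have gS : ∀ x : Fin n,
      g x = ∑ r ∈ S, w r * (arcSet r.1.1 r.1.2).indicator (fun _ => (1:ℝ)) x := by
    intro x
    rw [hg, hS]
    refine (Finset.sum_filter_of_ne ?_).symm
    intro r _ hfne hw0
    exact hfne (by rw [hw0, zero_mul])
  -- admissibility, subtype version
  have hadm : ∀ r r' : {p // p ∈ T}, r ≠ r' →
      ((arcSet r.1.1 r.1.2 ∩ arcSet r'.1.1 r'.1.2).Nonempty →
        arcSet r.1.1 r.1.2 ⊆ arcSet r'.1.1 r'.1.2 ∨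
          arcSet r'.1.1 r'.1.2 ⊆ arcSet r.1.1 r.1.2) ∧
      (arcSet r.1.1 r.1.2 ∩ arcSet r'.1.1 r'.1.2 = ∅ → r.1.2 ≠ r'.1.1 ∧ r'.1.2 ≠ r.1.1) :=
    fun r r' hne => hT.2 r.1 r.2 r'.1 r'.2 fun h => hne (Subtype.ext h)
  have hpair : ∀ r r' : {p // p ∈ T}, r.1.1 = r'.1.1 →
      ((r.1.2 - r.1.1 : Fin n) : ℕ) = ((r'.1.2 - r'.1.1 : Fin n) : ℕ) → r = r' := by
    intro r r' h1 h2
    apply Subtype.ext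
    apply Prod.ext h1
    rw [hjdec r, hjdec r', h2, h1]
  -- Part 1 : some point lies in no support arc, hence g ≡ 0
  have part1 : ∃ x0 : Fin n, ∀ r ∈ S, x0 ∉ arcSet r.1.1 r.1.2 := by
    by_contra hcov
    push_neg at hcov
    obtain ⟨q0, hq0S, hq0max⟩ := S.exists_max_image
      (fun r => ((r.1.2 - r.1.1 : Fin n) : ℕ)) ⟨q, hqS⟩
    obtain ⟨r, hrS, hjr⟩ := hcov q0.1.2
    have hj0q0 : q0.1.2 ∉ arcSet q0.1.1 q0.1.2 := by
      rw [mem_arc']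
      omega
    have hrne : r ≠ q0 := fun h => hj0q0 (h ▸ hjr)
    rcases Set.eq_empty_or_nonempty (arcSet r.1.1 r.1.2 ∩ arcSet q0.1.1 q0.1.2) with hemp | hne
    · obtain ⟨_, hji⟩ := (hadm r q0 hrne).2 hemp
      have ha0 : (q0.1.2 - r.1.1 : Fin n) ≠ 0 := fun h => hji (sub_eq_zero.mp h)
      have hb0 : (q0.1.2 - q0.1.1 : Fin n) ≠ 0 :=
        fun h => (hine q0) (sub_eq_zero.mp h).symm
      have hjr' : ((q0.1.2 - r.1.1 : Fin n) : ℕ) < ((r.1.2 - r.1.1 : Fin n) : ℕ) := hjr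
      have hm1 : (q0.1.2 - 1) ∈ arcSet r.1.1 r.1.2 := by
        rw [mem_arc', sub_right_comm, sub_one_val (by omega) ha0]
        have hv := val_ne_zero ha0
        omega
      have hm2 : (q0.1.2 - 1) ∈ arcSet q0.1.1 q0.1.2 := by
        rw [mem_arc', sub_right_comm, sub_one_val (by omega) hb0]
        have hv := val_ne_zero hb0
        have := hdpos q0
        omega
      have : (q0.1.2 - 1) ∈ (arcSet r.1.1 r.1.2 ∩ arcSet q0.1.1 q0.1.2) := ⟨hm1, hm2⟩
      rw [hemp] at this
      exact this
    · rcases (hadm r q0 hrne).1 hne with hsub | hsub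
      · exact hj0q0 (hsub hjr)
      · have hle := subset_le hn (hine q0) hsub
        have hmax := hq0max r hrS
        have ha : ((q0.1.1 - r.1.1 : Fin n) : ℕ) = 0 := by
          have := hdpos q0
          omega
        have hieq : q0.1.1 = r.1.1 := sub_eq_zero.mp (Fin.val_injective (by simp [ha]))
        exact hrne (hpair r q0 hieq.symm (by omega))
  obtain ⟨x0, hx0⟩ := part1
  have hg0 : ∀ x : Fin n, g x = 0 := by
    intro x
    rw [hconst x x0, gS]
    apply Finset.sum_eq_zero
    intro r hr
    rw [Set.indicator_of_notMem (hx0 r hr), mul_zero]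
  -- Part 2 : a maximal support arc and a point only covered by it
  obtain ⟨p, hpS, hpmax⟩ := S.exists_max_image
    (fun r => ((r.1.2 - r.1.1 : Fin n) : ℕ)) ⟨q, hqS⟩
  have hwp : w p ≠ 0 := (Finset.mem_filter.mp hpS).2
  have fact1 : ∀ r ∈ S, r ≠ p → (arcSet r.1.1 r.1.2 ∩ arcSet p.1.1 p.1.2).Nonempty →
      arcSet r.1.1 r.1.2 ⊆ arcSet p.1.1 p.1.2 := by
    intro r hrS hrne hne
    rcases (hadm r p hrne).1 hne with hsub | hsub
    · exact hsub
    · exfalso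
      have hle := subset_le hn (hine p) hsub
      have hmax := hpmax r hrS
      have ha : ((p.1.1 - r.1.1 : Fin n) : ℕ) = 0 := by
        have := hdpos p
        omega
      have hieq : p.1.1 = r.1.1 := sub_eq_zero.mp (Fin.val_injective (by simp [ha]))
      exact hrne (hpair r p hieq.symm (by omega))
  obtain ⟨x, hxp, honly⟩ : ∃ x : Fin n, x ∈ arcSet p.1.1 p.1.2 ∧
      ∀ r ∈ S, x ∈ arcSet r.1.1 r.1.2 → r = p := by
    by_cases hB : ∃ r ∈ S, r ≠ p ∧ r.1.1 = p.1.1 ∧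
        arcSet r.1.1 r.1.2 ⊆ arcSet p.1.1 p.1.2
    · -- there is a child starting at p.1.1 ; take a maximal one
      obtain ⟨q0, hq0mem, hq0max⟩ := (S.filter (fun r => r ≠ p ∧ r.1.1 = p.1.1 ∧
          arcSet r.1.1 r.1.2 ⊆ arcSet p.1.1 p.1.2)).exists_max_image
        (fun r => ((r.1.2 - r.1.1 : Fin n) : ℕ)) (by
          obtain ⟨r, h1, h2⟩ := hB
          exact ⟨r, Finset.mem_filter.mpr ⟨h1, h2⟩⟩)
      have hq0max' : ∀ r ∈ S, r ≠ p → r.1.1 = p.1.1 →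
          arcSet r.1.1 r.1.2 ⊆ arcSet p.1.1 p.1.2 →
          ((r.1.2 - r.1.1 : Fin n) : ℕ) ≤ ((q0.1.2 - q0.1.1 : Fin n) : ℕ) :=
        fun r h1 h2 h3 h4 => hq0max r (Finset.mem_filter.mpr ⟨h1, h2, h3, h4⟩)
      obtain ⟨hq0S, hq0ne, hq0i, hq0sub⟩ :
          q0 ∈ S ∧ q0 ≠ p ∧ q0.1.1 = p.1.1 ∧
            arcSet q0.1.1 q0.1.2 ⊆ arcSet p.1.1 p.1.2 := by
        have := Finset.mem_filter.mp hq0mem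
        exact ⟨this.1, this.2.1, this.2.2.1, this.2.2.2⟩
      have hble := subset_le hn (hine q0) hq0sub
      have hblt : ((q0.1.2 - q0.1.1 : Fin n) : ℕ) < ((p.1.2 - p.1.1 : Fin n) : ℕ) := by
        rcases lt_or_eq_of_le (by omega :
            ((q0.1.2 - q0.1.1 : Fin n) : ℕ) ≤ ((p.1.2 - p.1.1 : Fin n) : ℕ)) with h | h
        · exact h
        · exact absurd (hpair q0 p hq0i h) hq0ne
      refine ⟨p.1.1 + ((((q0.1.2 - q0.1.1 : Fin n) : ℕ)) : Fin n), ?_, ?_⟩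
      · rw [hjdec p, mem_arc_iff (hdlt p), add_sub_cancel_left,
          Fin.val_cast_of_lt (hdlt q0)]
        exact hblt
      · intro r hrS hmem
        by_contra hrne
        have hxmemp : (p.1.1 + ((((q0.1.2 - q0.1.1 : Fin n) : ℕ)) : Fin n))
            ∈ arcSet p.1.1 p.1.2 := by
          rw [hjdec p, mem_arc_iff (hdlt p), add_sub_cancel_left,
            Fin.val_cast_of_lt (hdlt q0)]
          exact hblt
        have hne : (arcSet r.1.1 r.1.2 ∩ arcSet p.1.1 p.1.2).Nonempty :=
          ⟨_, hmem, hxmemp⟩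
        have hsub := fact1 r hrS hrne hne
        have hle := subset_le hn (hine r) hsub
        have hrep : r.1.1 = p.1.1 + ((((r.1.1 - p.1.1 : Fin n) : ℕ)) : Fin n) :=
          decompose _ _
        have hxv : ((p.1.1 + ((((q0.1.2 - q0.1.1 : Fin n) : ℕ)) : Fin n)
              - r.1.1 : Fin n) : ℕ)
            = if ((r.1.1 - p.1.1 : Fin n) : ℕ) ≤ ((q0.1.2 - q0.1.1 : Fin n) : ℕ)
              then ((q0.1.2 - q0.1.1 : Fin n) : ℕ) - ((r.1.1 - p.1.1 : Fin n) : ℕ)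
              else n - ((r.1.1 - p.1.1 : Fin n) : ℕ) + ((q0.1.2 - q0.1.1 : Fin n) : ℕ) := by
          conv_lhs => rw [hrep]
          exact diff_val p.1.1 _ _ (hdlt q0) (Fin.isLt _)
        have hmem' : ((p.1.1 + ((((q0.1.2 - q0.1.1 : Fin n) : ℕ)) : Fin n)
            - r.1.1 : Fin n) : ℕ) < ((r.1.2 - r.1.1 : Fin n) : ℕ) := hmem
        rw [hxv] at hmem'
        by_cases hab : ((r.1.1 - p.1.1 : Fin n) : ℕ) ≤ ((q0.1.2 - q0.1.1 : Fin n) : ℕ)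
        · rw [if_pos hab] at hmem'
          by_cases ha0 : ((r.1.1 - p.1.1 : Fin n) : ℕ) = 0
          · have hieq : r.1.1 = p.1.1 := sub_eq_zero.mp (Fin.val_injective (by simp [ha0]))
            have hrle := hq0max' r hrS hrne hieq hsub
            omega
          · have hrq0 : r ≠ q0 := by
              intro h
              apply ha0
              rw [h, hq0i, sub_self, Fin.val_zero]
            by_cases hab' : ((r.1.1 - p.1.1 : Fin n) : ℕ) = ((q0.1.2 - q0.1.1 : Fin n) : ℕ)
            · -- abutting case : arcs disjoint but q0.1.2 = r.1.1
              have hq0arc : arcSet q0.1.1 q0.1.2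
                  = arcSet p.1.1 (p.1.1 + ((((q0.1.2 - q0.1.1 : Fin n) : ℕ)) : Fin n)) := by
                conv_lhs => rw [hjdec q0]
                generalize (((q0.1.2 - q0.1.1 : Fin n) : ℕ)) = D
                rw [hq0i]
              have hrarc : arcSet r.1.1 r.1.2
                  = arcSet (p.1.1 + ((((r.1.1 - p.1.1 : Fin n) : ℕ)) : Fin n))
                      (p.1.1 + ((((r.1.1 - p.1.1 : Fin n) : ℕ)) : Fin n)
                        + ((((r.1.2 - r.1.1 : Fin n) : ℕ)) : Fin n)) := by
                rw [← hrep, ← hjdec r]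
              have hdisj : arcSet q0.1.1 q0.1.2 ∩ arcSet r.1.1 r.1.2 = ∅ := by
                ext z
                simp only [Set.mem_inter_iff, Set.mem_empty_iff_false, iff_false, not_and]
                intro hz1 hz2
                rw [hq0arc, mem_arc_iff (hdlt q0)] at hz1
                rw [hrarc] at hz2
                have hzdec : z = p.1.1 + ((((z - p.1.1 : Fin n) : ℕ)) : Fin n) :=
                  decompose _ _
                rw [mem_arc_iff (hdlt r)] at hz2
                have hzv : ((z - (p.1.1 + ((((r.1.1 - p.1.1 : Fin n) : ℕ)) : Fin n))
                      : Fin n) : ℕ)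
                    = if ((r.1.1 - p.1.1 : Fin n) : ℕ) ≤ ((z - p.1.1 : Fin n) : ℕ)
                      then ((z - p.1.1 : Fin n) : ℕ) - ((r.1.1 - p.1.1 : Fin n) : ℕ)
                      else n - ((r.1.1 - p.1.1 : Fin n) : ℕ) + ((z - p.1.1 : Fin n) : ℕ) := by
                  conv_lhs => rw [hzdec]
                  exact diff_val p.1.1 _ _ (Fin.isLt _) (Fin.isLt _)
                rw [hzv] at hz2
                have h1 := hdlt p
                split_ifs at hz2 <;> omega
              obtain ⟨habut, _⟩ := (hadm q0 r (fun h => hrq0 h.symm)).2 hdisj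
              apply habut
              rw [hjdec q0]
              conv_rhs => rw [hrep]
              rw [hab']
              generalize (((q0.1.2 - q0.1.1 : Fin n) : ℕ)) = D
              rw [hq0i]
            · -- 1 ≤ a < b : compare r with q0
              have haltb : ((r.1.1 - p.1.1 : Fin n) : ℕ) < ((q0.1.2 - q0.1.1 : Fin n) : ℕ) := by
                omega
              have hq0arc : arcSet q0.1.1 q0.1.2
                  = arcSet p.1.1 (p.1.1 + ((((q0.1.2 - q0.1.1 : Fin n) : ℕ)) : Fin n)) := by
                conv_lhs => rw [hjdec q0]
                generalize (((q0.1.2 - q0.1.1 : Fin n) : ℕ)) = D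
                rw [hq0i]
              have hymem1 : r.1.1 ∈ arcSet r.1.1 r.1.2 := by
                rw [mem_arc', sub_self, Fin.val_zero]
                exact hdpos r
              have hymem2 : r.1.1 ∈ arcSet q0.1.1 q0.1.2 := by
                rw [hq0arc, mem_arc_iff (hdlt q0)]
                omega
              rcases (hadm r q0 hrq0).1 ⟨r.1.1, hymem1, hymem2⟩ with hsub2 | hsub2
              · have hle2 := subset_le hn (hine r) hsub2
                have he : ((r.1.1 - q0.1.1 : Fin n) : ℕ) = ((r.1.1 - p.1.1 : Fin n) : ℕ) := by
                  rw [hq0i]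
                omega
              · have hle2 := subset_le hn (hine q0) hsub2
                have he : ((q0.1.1 - r.1.1 : Fin n) : ℕ)
                    = n - ((r.1.1 - p.1.1 : Fin n) : ℕ) := by
                  rw [hq0i]
                  conv_lhs => rw [hrep]
                  exact neg_diff (Fin.isLt _) ha0
                have h1 := hdlt p
                have h2 := hdpos q0
                omega
        · rw [if_neg hab] at hmem'
          have h1 := hdlt p
          have h2 : ((r.1.1 - p.1.1 : Fin n) : ℕ) < n := Fin.isLt _
          omega
    · -- no child starts at p.1.1 : the point p.1.1 works
      push_neg at hB
      refine ⟨p.1.1, ?_, ?_⟩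
      · rw [mem_arc', sub_self, Fin.val_zero]
        exact hdpos p
      · intro r hrS hmem
        by_contra hrne
        have hpmem : p.1.1 ∈ arcSet p.1.1 p.1.2 := by
          rw [mem_arc', sub_self, Fin.val_zero]
          exact hdpos p
        have hne : (arcSet r.1.1 r.1.2 ∩ arcSet p.1.1 p.1.2).Nonempty :=
          ⟨p.1.1, hmem, hpmem⟩
        have hsub := fact1 r hrS hrne hne
        have hle := subset_le hn (hine r) hsub
        by_cases ha0 : ((r.1.1 - p.1.1 : Fin n) : ℕ) = 0
        · have hieq : r.1.1 = p.1.1 := sub_eq_zero.mp (Fin.val_injective (by simp [ha0]))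
          exact hB r hrS hrne hieq hsub
        · have hrep : r.1.1 = p.1.1 + ((((r.1.1 - p.1.1 : Fin n) : ℕ)) : Fin n) :=
            decompose _ _
          have hv : ((p.1.1 - r.1.1 : Fin n) : ℕ) = n - ((r.1.1 - p.1.1 : Fin n) : ℕ) := by
            conv_lhs => rw [hrep]
            exact neg_diff (Fin.isLt _) ha0
          have hmem' : ((p.1.1 - r.1.1 : Fin n) : ℕ) < ((r.1.2 - r.1.1 : Fin n) : ℕ) := hmem
          have h1 := hdlt p
          have h2 : ((r.1.1 - p.1.1 : Fin n) : ℕ) < n := Fin.isLt _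
          omega
  -- conclusion
  have hgx := hg0 x
  rw [gS] at hgx
  rw [Finset.sum_eq_single p (fun r hr hrp => ?_) (fun hp => absurd hpS hp)] at hgx
  · rw [Set.indicator_of_mem hxp, mul_one] at hgx
    exact hwp hgx
  · by_cases hmem : x ∈ arcSet r.1.1 r.1.2
    · exact absurd (honly r hr hmem) hrp
    · rw [Set.indicator_of_notMem hmem, mul_zero]
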